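/- arXiv:2106.00382 — 6 statements merged into one kernel-verified Lean document; each statement's English description precedes it below -/
import Mathlib

section
/- For all integers n > k ≥ 2, 5^(n·2^(n-2)) ≡ 5^(k·2^(k-2)) (mod 10^k), and 1 - 5^(n·2^(n-2)) ≡ 1 - 5^(k·2^(k-2)) (mod 10^k). Moreover, for every n ≥ 2, 5^(n·2^(n-2)) ≡ 5 (mod 10) and 1 - 5^(n·2^(n-2)) ≡ 6 (mod 10). -/
lemma pow5_two_pow (k : ℕ) (hk : 2 ≤ k) :
    (5 : ℤ) ^ (2 ^ (k - 2)) ≡ 1 [ZMOD (2 : ℤ) ^ k] := by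
  induction k, hk using Nat.le_induction with
  | base => decide
  | succ k hk ih =>
    rw [Int.modEq_comm, Int.modEq_iff_dvd] at ih ⊢
    have h1 : k + 1 - 2 = (k - 2) + 1 := by omega
    set x : ℤ := 5 ^ (2 ^ (k - 2)) with hx
    have h2 : (5 : ℤ) ^ (2 ^ (k + 1 - 2)) = x ^ 2 := by
      rw [h1, hx, ← pow_mul, pow_succ]
    rw [h2]
    have hodd : Odd x := Odd.pow (by decide)
    have heven : (2 : ℤ) ∣ x + 1 := (Odd.add_one hodd).two_dvd
    have : x ^ 2 - 1 = (x - 1) * (x + 1) := by ring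
    rw [this, pow_succ]
    exact mul_dvd_mul ih heven

lemma pow5_mult (k m : ℕ) (hk : 2 ≤ k) :
    (5 : ℤ) ^ (2 ^ (k - 2) * m) ≡ 1 [ZMOD (2 : ℤ) ^ k] := by
  have := (pow5_two_pow k hk).pow m
  rwa [← pow_mul, one_pow] at this

lemma pow5_mod10 (e : ℕ) (he : 1 ≤ e) : (5 : ℤ) ^ e ≡ 5 [ZMOD (10 : ℤ)] := by
  induction e, he using Nat.le_induction with
  | base => decide
  | succ e he ih =>
    calc (5 : ℤ) ^ (e + 1) = 5 * 5 ^ e := by ring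
    _ ≡ 5 * 5 [ZMOD (10 : ℤ)] := ih.mul_left 5
    _ ≡ 5 [ZMOD (10 : ℤ)] := by decide

theorem nontrivial_solutions_compatible :
    (∀ n k : ℕ, 2 ≤ k → k < n →
      (5 : ℤ) ^ (n * 2 ^ (n - 2)) ≡ (5 : ℤ) ^ (k * 2 ^ (k - 2)) [ZMOD (10 : ℤ) ^ k] ∧
      1 - (5 : ℤ) ^ (n * 2 ^ (n - 2)) ≡ 1 - (5 : ℤ) ^ (k * 2 ^ (k - 2)) [ZMOD (10 : ℤ) ^ k]) ∧
    (∀ n : ℕ, 2 ≤ n →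
      (5 : ℤ) ^ (n * 2 ^ (n - 2)) ≡ 5 [ZMOD (10 : ℤ)] ∧
      1 - (5 : ℤ) ^ (n * 2 ^ (n - 2)) ≡ 6 [ZMOD (10 : ℤ)]) := by
  constructor
  · intro n k hk hkn
    have hmain : (5 : ℤ) ^ (n * 2 ^ (n - 2)) ≡ (5 : ℤ) ^ (k * 2 ^ (k - 2)) [ZMOD (10 : ℤ) ^ k] := by
      have h10 : (10 : ℤ) ^ k = 2 ^ k * 5 ^ k := by
        rw [show (10 : ℤ) = 2 * 5 by norm_num, mul_pow]
      rw [h10, Int.modEq_iff_dvd]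
      have hcop : IsCoprime ((2 : ℤ) ^ k) ((5 : ℤ) ^ k) :=
        IsCoprime.pow (Int.isCoprime_iff_gcd_eq_one.mpr (by decide))
      apply hcop.mul_dvd
      · -- 2^k part
        have hN : n * 2 ^ (n - 2) = 2 ^ (k - 2) * (n * 2 ^ (n - k)) := by
          rw [show 2 ^ (k - 2) * (n * 2 ^ (n - k)) = n * (2 ^ (k - 2) * 2 ^ (n - k)) by ring,
            ← pow_add]
          congr 2
          omega
        have hK : k * 2 ^ (k - 2) = 2 ^ (k - 2) * k := by ring
        have h1 : (5 : ℤ) ^ (n * 2 ^ (n - 2)) ≡ 1 [ZMOD (2 : ℤ) ^ k] := by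
          rw [hN]; exact pow5_mult k _ hk
        have h2 : (5 : ℤ) ^ (k * 2 ^ (k - 2)) ≡ 1 [ZMOD (2 : ℤ) ^ k] := by
          rw [hK]; exact pow5_mult k _ hk
        exact Int.ModEq.dvd (h1.trans h2.symm)
      · -- 5^k part
        apply dvd_sub
        · exact pow_dvd_pow 5 (le_trans (Nat.le_mul_of_pos_right k (Nat.pow_pos (by norm_num))) le_rfl)
        · exact pow_dvd_pow 5 (le_trans (le_of_lt hkn) (Nat.le_mul_of_pos_right n (Nat.pow_pos (by norm_num))))
    exact ⟨hmain, (Int.ModEq.refl 1).sub hmain⟩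
  · intro n hn
    have he : 1 ≤ n * 2 ^ (n - 2) := Nat.mul_pos (by omega) (Nat.two_pow_pos _)
    have h := pow5_mod10 _ he
    refine ⟨h, ?_⟩
    calc (1 : ℤ) - 5 ^ (n * 2 ^ (n - 2)) ≡ 1 - 5 [ZMOD (10 : ℤ)] := (Int.ModEq.refl 1).sub h
    _ ≡ 6 [ZMOD (10 : ℤ)] := by decide
end

section
/- Let n ≥ 2 be an integer, and let r and s be natural numbers with r < 10^n and s < 10^n such that r ≡ 1 (mod 2^n), r ≡ 0 (mod 5^n), s ≡ 0 (mod 2^n), and s ≡ 1 (mod 5^n). Then the n-th digits from the right of r and s in base 10 sum to 9; that is, ⌊r / 10^(n-1)⌋ + ⌊s / 10^(n-1)⌋ = 9. -/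
theorem leading_digits_sum_nine (n : ℕ) (hn : 2 ≤ n) (r s : ℕ)
    (hr1 : r < 10 ^ n) (hs1 : s < 10 ^ n)
    (hr2 : r ≡ 1 [MOD 2 ^ n]) (hr5 : r ≡ 0 [MOD 5 ^ n])
    (hs2 : s ≡ 0 [MOD 2 ^ n]) (hs5 : s ≡ 1 [MOD 5 ^ n]) :
    r / 10 ^ (n - 1) + s / 10 ^ (n - 1) = 9 := by
  set m := 10 ^ (n - 1) with hm
  have hmpos : 0 < m := Nat.pow_pos (by norm_num)
  have h10 : 10 ^ n = 10 * m := by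
    rw [hm, ← pow_succ']
    congr 1
    omega
  have hcop : Nat.Coprime (2 ^ n) (5 ^ n) :=
    Nat.Coprime.pow _ _ (show Nat.Coprime 2 5 by norm_num)
  have hsum2 : r + s ≡ 1 [MOD 2 ^ n] := by simpa using hr2.add hs2
  have hsum5 : r + s ≡ 1 [MOD 5 ^ n] := by simpa using hr5.add hs5
  have hsum10 : r + s ≡ 1 [MOD 10 ^ n] := by
    have := (Nat.modEq_and_modEq_iff_modEq_mul hcop).mp ⟨hsum2, hsum5⟩
    have h : (2 : ℕ) ^ n * 5 ^ n = 10 ^ n := by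
      rw [← mul_pow]; norm_num
    rwa [h] at this
  have h2n : 1 < 2 ^ n := Nat.one_lt_pow (by omega) (by norm_num)
  have h5n : 1 < 5 ^ n := Nat.one_lt_pow (by omega) (by norm_num)
  have h10n : 1 < 10 ^ n := Nat.one_lt_pow (by omega) (by norm_num)
  have h10pos : 0 < 10 ^ n := by omega
  have hrpos : 0 < r := by
    rcases Nat.eq_zero_or_pos r with h | h
    · exfalso
      have := hr2
      unfold Nat.ModEq at this
      rw [h] at this
      simp [Nat.mod_eq_of_lt h2n] at this
    · exact h
  have hspos : 0 < s := by
    rcases Nat.eq_zero_or_pos s with h | h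
    · exfalso
      have := hs5
      unfold Nat.ModEq at this
      rw [h] at this
      simp [Nat.mod_eq_of_lt h5n] at this
    · exact h
  -- r + s = 10^n + 1
  have h1 : (r + s) % 10 ^ n = 1 := by
    have h := hsum10
    unfold Nat.ModEq at h
    rwa [Nat.one_mod_eq_one.mpr (by omega)] at h
  have hge : 10 ^ n ≤ r + s := by
    by_contra hc
    push_neg at hc
    rw [Nat.mod_eq_of_lt hc] at h1
    omega
  have hrs : r + s = 10 ^ n + 1 := by
    have hq1 : (r + s) / 10 ^ n < 2 :=
      (Nat.div_lt_iff_lt_mul h10pos).mpr (by omega)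
    have hq2 : 1 ≤ (r + s) / 10 ^ n := (Nat.one_le_div_iff h10pos).mpr hge
    have hdm := Nat.div_add_mod (r + s) (10 ^ n)
    have hq : (r + s) / 10 ^ n = 1 := by omega
    rw [hq] at hdm
    omega
  -- remainders mod m are divisible by 5^(n-1), 2^(n-1) respectively
  have h5m : (5 : ℕ) ^ (n - 1) ∣ m := pow_dvd_pow_of_dvd (by norm_num) _
  have h2m : (2 : ℕ) ^ (n - 1) ∣ m := pow_dvd_pow_of_dvd (by norm_num) _
  have h5r : (5 : ℕ) ^ (n - 1) ∣ r :=
    (pow_dvd_pow 5 (by omega : n - 1 ≤ n)).trans (Nat.modEq_zero_iff_dvd.mp hr5)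
  have h2s : (2 : ℕ) ^ (n - 1) ∣ s :=
    (pow_dvd_pow 2 (by omega : n - 1 ≤ n)).trans (Nat.modEq_zero_iff_dvd.mp hs2)
  have hb : (5 : ℕ) ^ (n - 1) ∣ r % m := (Nat.dvd_mod_iff h5m).mpr h5r
  have hd : (2 : ℕ) ^ (n - 1) ∣ s % m := (Nat.dvd_mod_iff h2m).mpr h2s
  have h5big : 5 ≤ 5 ^ (n - 1) := by
    calc (5:ℕ) = 5 ^ 1 := (pow_one 5).symm
    _ ≤ 5 ^ (n-1) := Nat.pow_le_pow_right (by norm_num) (by omega)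
  have h2big : 2 ≤ 2 ^ (n - 1) := by
    calc (2:ℕ) = 2 ^ 1 := (pow_one 2).symm
    _ ≤ 2 ^ (n-1) := Nat.pow_le_pow_right (by norm_num) (by omega)
  have hmgt1 : 1 < m := Nat.one_lt_pow (by omega) (by norm_num)
  -- b + d ≡ 1 mod m
  have hbd : (r % m + s % m) % m = 1 := by
    rw [← Nat.add_mod, hrs, h10, Nat.add_comm, Nat.mul_comm,
      Nat.add_mul_mod_self_left, Nat.mod_eq_of_lt hmgt1]
  have hblt : r % m < m := Nat.mod_lt _ hmpos
  have hdlt : s % m < m := Nat.mod_lt _ hmpos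
  have hbdval : r % m + s % m = m + 1 := by
    have hcases : r % m + s % m = 1 ∨ r % m + s % m = m + 1 := by
      rcases Nat.lt_or_ge (r % m + s % m) m with h | h
      · left; rw [Nat.mod_eq_of_lt h] at hbd; exact hbd
      · right
        have hlt : r % m + s % m - m < m := by omega
        have h2 : (r % m + s % m) % m = (r % m + s % m - m) % m := by
          conv_lhs => rw [show r % m + s % m = (r % m + s % m - m) + m by omega]
          simp [Nat.add_mod_right]
        rw [h2, Nat.mod_eq_of_lt hlt] at hbd
        omega
    rcases hcases with h | h
    · exfalso
      rcases Nat.eq_zero_or_pos (r % m) with hb0 | hb0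
      · have hd1 : s % m = 1 := by omega
        rw [hd1] at hd
        have := Nat.le_of_dvd (by norm_num) hd
        omega
      · have hb1 : r % m = 1 := by omega
        rw [hb1] at hb
        have := Nat.le_of_dvd (by norm_num) hb
        omega
    · exact h
  -- finish
  have hr' := Nat.div_add_mod r m
  have hs' := Nat.div_add_mod s m
  have key : m * (r / m + s / m) = m * 9 := by
    have e : m * (r / m) + m * (s / m) + (r % m + s % m) = 10 * m + 1 := by
      rw [← h10, ← hrs]
      omega
    rw [Nat.mul_add]
    omega
  exact Nat.eq_of_mul_eq_mul_left hmpos key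
end

section
/- Let n ≥ 2 be an integer, and let r and s be natural numbers with r < 10^n and s < 10^n such that r ≡ 1 (mod 2^n), r ≡ 0 (mod 5^n), s ≡ 0 (mod 2^n), and s ≡ 1 (mod 5^n). Then max(r, s) ≥ 10^(n-1); that is, at least one of r, s has exactly n digits in base 10. -/
theorem one_has_n_digits (n : ℕ) (hn : 2 ≤ n) (r s : ℕ)
    (hr1 : r < 10 ^ n) (hs1 : s < 10 ^ n)
    (hr2 : r ≡ 1 [MOD 2 ^ n]) (hr5 : r ≡ 0 [MOD 5 ^ n])
    (hs2 : s ≡ 0 [MOD 2 ^ n]) (hs5 : s ≡ 1 [MOD 5 ^ n]) :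
    10 ^ (n - 1) ≤ max r s := by
  have hcop : Nat.Coprime (2 ^ n) (5 ^ n) := by
    apply Nat.Coprime.pow; norm_num
  have h2 : r + s ≡ 1 [MOD 2 ^ n] := by simpa using hr2.add hs2
  have h5 : r + s ≡ 1 [MOD 5 ^ n] := by simpa using hr5.add hs5
  have h10 : r + s ≡ 1 [MOD 10 ^ n] := by
    have := (Nat.modEq_and_modEq_iff_modEq_mul hcop).mp ⟨h2, h5⟩
    simpa [← mul_pow] using this
  have h2n : 4 ≤ 2 ^ n := by
    calc 4 = 2 ^ 2 := by norm_num
    _ ≤ 2 ^ n := Nat.pow_le_pow_right (by norm_num) hn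
  have h1lt : 1 < 10 ^ n := by
    have : (1:ℕ) < 10 := by norm_num
    exact one_lt_pow₀ this (by omega)
  -- r + s mod 10^n = 1
  have hmod : (r + s) % 10 ^ n = 1 := by
    have := h10
    unfold Nat.ModEq at this
    rwa [Nat.mod_eq_of_lt h1lt] at this
  -- r + s ≠ 1
  have hne : r + s ≠ 1 := by
    intro h
    have hr01 : r = 0 ∨ r = 1 := by omega
    rcases hr01 with rfl | rfl
    · -- r = 0, s = 1
      have : (0:ℕ) % 2 ^ n = 1 % 2 ^ n := hr2
      rw [Nat.zero_mod, Nat.mod_eq_of_lt (by omega)] at this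
      omega
    · -- r = 1
      have : (1:ℕ) % 5 ^ n = 0 % 5 ^ n := hr5
      have h5n : 4 ≤ 5 ^ n := by
        calc 4 ≤ 5 ^ 2 := by norm_num
        _ ≤ 5 ^ n := Nat.pow_le_pow_right (by norm_num) hn
      rw [Nat.zero_mod, Nat.mod_eq_of_lt (by omega)] at this
      omega
  have hsum : r + s = 10 ^ n + 1 := by
    have hlt : r + s < 2 * 10 ^ n := by omega
    rcases Nat.lt_or_ge (r + s) (10 ^ n) with h | h
    · rw [Nat.mod_eq_of_lt h] at hmod; omega
    · have hq2 : (r + s) / 10 ^ n < 2 := Nat.div_lt_of_lt_mul (by omega)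
      have hd := Nat.div_add_mod (r + s) (10 ^ n)
      rw [hmod] at hd
      interval_cases hq : (r + s) / 10 ^ n <;> omega
  have hhalf : 10 ^ n = 10 * 10 ^ (n - 1) := by
    rw [← pow_succ']
    congr 1
    omega
  rcases le_total r s with h | h
  · simp only [max_eq_right h]; omega
  · simp only [max_eq_left h]; omega
end

section
/- For every integer n ≥ 2, the number of natural numbers x with 10^(n-1) ≤ x < 10^n satisfying x^2 ≡ x (mod 10^n) is at least 1 and at most 2. -/
private lemma ten_pow_eq (n : ℕ) : 10 ^ n = 2 ^ n * 5 ^ n := by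
  rw [← Nat.mul_pow]

private lemma co25 (n : ℕ) : Nat.Coprime (2 ^ n) (5 ^ n) :=
  Nat.Coprime.pow n n (by norm_num)

private lemma auto_of (n x : ℕ) (hx : 1 ≤ x)
    (h : (2 ^ n ∣ x ∧ 5 ^ n ∣ x - 1) ∨ (5 ^ n ∣ x ∧ 2 ^ n ∣ x - 1)) :
    x ^ 2 ≡ x [MOD 10 ^ n] := by
  have hle : x ≤ x ^ 2 := by nlinarith
  have hsub : x ^ 2 - x = x * (x - 1) := by
    rw [Nat.mul_sub, pow_two, Nat.mul_one]
  refine ((Nat.modEq_iff_dvd' hle).mpr ?_).symm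
  rw [hsub, ten_pow_eq]
  rcases h with ⟨h2, h5⟩ | ⟨h5, h2⟩
  · exact (co25 n).mul_dvd_of_dvd_of_dvd (h2.mul_right _) (h5.mul_left _)
  · exact (co25 n).mul_dvd_of_dvd_of_dvd (h2.mul_left _) (h5.mul_right _)

theorem count_n_digit_solutions (n : ℕ) (hn : 2 ≤ n) :
    1 ≤ ((Finset.Ico (10 ^ (n - 1)) (10 ^ n)).filter
          (fun x => x ^ 2 ≡ x [MOD 10 ^ n])).card ∧
    ((Finset.Ico (10 ^ (n - 1)) (10 ^ n)).filter
          (fun x => x ^ 2 ≡ x [MOD 10 ^ n])).card ≤ 2 := by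
  have h2pos : (1:ℕ) < 2 ^ n :=
    lt_of_lt_of_le (by norm_num) (Nat.pow_le_pow_right (by norm_num) hn :
      (2:ℕ) ^ 2 ≤ 2 ^ n)
  have h5pos : (1:ℕ) < 5 ^ n :=
    lt_of_lt_of_le (by norm_num) (Nat.pow_le_pow_right (by norm_num) hn :
      (5:ℕ) ^ 2 ≤ 5 ^ n)
  have hten : 10 ^ n = 2 ^ n * 5 ^ n := ten_pow_eq n
  have htenlo : 10 * 10 ^ (n - 1) = 10 ^ n := by
    rw [← pow_succ']; congr 1; omega
  have h10lo : 10 ≤ 10 ^ (n - 1) := by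
    calc (10:ℕ) = 10 ^ 1 := by norm_num
    _ ≤ 10 ^ (n - 1) := Nat.pow_le_pow_right (by norm_num) (by omega)
  have h2ne : (2:ℕ) ^ n ≠ 0 := by positivity
  have h5ne : (5:ℕ) ^ n ≠ 0 := by positivity
  set a : ℕ := (Nat.chineseRemainder (co25 n) 0 1 : ℕ) with hadef
  set b : ℕ := (Nat.chineseRemainder (co25 n) 1 0 : ℕ) with hbdef
  have ha2 : a ≡ 0 [MOD 2 ^ n] := (Nat.chineseRemainder (co25 n) 0 1).2.1
  have ha5 : a ≡ 1 [MOD 5 ^ n] := (Nat.chineseRemainder (co25 n) 0 1).2.2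
  have hb2 : b ≡ 1 [MOD 2 ^ n] := (Nat.chineseRemainder (co25 n) 1 0).2.1
  have hb5 : b ≡ 0 [MOD 5 ^ n] := (Nat.chineseRemainder (co25 n) 1 0).2.2
  have halt : a < 10 ^ n := by
    rw [hten]; exact Nat.chineseRemainder_lt_mul _ 0 1 h2ne h5ne
  have hblt : b < 10 ^ n := by
    rw [hten]; exact Nat.chineseRemainder_lt_mul _ 1 0 h2ne h5ne
  have ha1 : 1 ≤ a := by
    have h : a % 5 ^ n = 1 % 5 ^ n := ha5
    rw [Nat.mod_eq_of_lt h5pos] at h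
    have := Nat.mod_le a (5 ^ n); omega
  have hb1 : 1 ≤ b := by
    have h : b % 2 ^ n = 1 % 2 ^ n := hb2
    rw [Nat.mod_eq_of_lt h2pos] at h
    have := Nat.mod_le b (2 ^ n); omega
  have ha2d : 2 ^ n ∣ a := (Nat.modEq_zero_iff_dvd).1 ha2
  have hb5d : 5 ^ n ∣ b := (Nat.modEq_zero_iff_dvd).1 hb5
  have ha5d : 5 ^ n ∣ a - 1 := (Nat.modEq_iff_dvd' ha1).1 ha5.symm
  have hb2d : 2 ^ n ∣ b - 1 := (Nat.modEq_iff_dvd' hb1).1 hb2.symm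
  have hab : a + b = 10 ^ n + 1 := by
    have hsum : a + b ≡ 1 [MOD 10 ^ n] := by
      rw [hten]
      exact (Nat.modEq_and_modEq_iff_modEq_mul (co25 n)).1
        ⟨by simpa using ha2.add hb2, by simpa using ha5.add hb5⟩
    have h1 : (a + b) % (10 ^ n) = 1 := by
      have h' : (a + b) % 10 ^ n = 1 % 10 ^ n := hsum
      rwa [Nat.mod_eq_of_lt (by omega : 1 < 10 ^ n)] at h'
    rcases lt_or_ge (a + b) (10 ^ n) with h | h
    · rw [Nat.mod_eq_of_lt h] at h1; omega
    · rw [Nat.mod_eq_sub_mod h, Nat.mod_eq_of_lt (by omega)] at h1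
      omega
  have hmem : ∀ x, 10 ^ (n-1) ≤ x → x < 10 ^ n →
      ((2 ^ n ∣ x ∧ 5 ^ n ∣ x - 1) ∨ (5 ^ n ∣ x ∧ 2 ^ n ∣ x - 1)) →
      x ∈ (Finset.Ico (10 ^ (n - 1)) (10 ^ n)).filter
          (fun x => x ^ 2 ≡ x [MOD 10 ^ n]) := by
    intro x hlo hhi h
    exact Finset.mem_filter.2 ⟨Finset.mem_Ico.2 ⟨hlo, hhi⟩,
      auto_of n x (by omega) h⟩
  constructor
  · refine Finset.card_pos.mpr ?_
    rcases le_total a b with hle | hle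
    · exact ⟨b, hmem b (by omega) hblt (Or.inr ⟨hb5d, hb2d⟩)⟩
    · exact ⟨a, hmem a (by omega) halt (Or.inl ⟨ha2d, ha5d⟩)⟩
  · have hsubs : (Finset.Ico (10 ^ (n - 1)) (10 ^ n)).filter
          (fun x => x ^ 2 ≡ x [MOD 10 ^ n]) ⊆ {a, b} := by
      intro x hx
      obtain ⟨hmemI, hmod⟩ := Finset.mem_filter.1 hx
      obtain ⟨hlo, hhi⟩ := Finset.mem_Ico.1 hmemI
      have hx2 : 2 ≤ x := by omega
      have hdvd : 10 ^ n ∣ x * (x - 1) := by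
        have hle : x ≤ x ^ 2 := by nlinarith
        have h := (Nat.modEq_iff_dvd' hle).1 hmod.symm
        rwa [show x ^ 2 - x = x * (x - 1) by
          rw [Nat.mul_sub, pow_two, Nat.mul_one]] at h
      rw [hten] at hdvd
      have hd2 : 2 ^ n ∣ x * (x - 1) := Dvd.dvd.trans (dvd_mul_right _ _) hdvd
      have hd5 : 5 ^ n ∣ x * (x - 1) := Dvd.dvd.trans (dvd_mul_left _ _) hdvd
      have hp2 : Prime (2:ℕ) := Nat.prime_iff.1 (by norm_num)
      have hp5 : Prime (5:ℕ) := Nat.prime_iff.1 (by norm_num)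
      have c2 : 2 ^ n ∣ x ∨ 2 ^ n ∣ x - 1 := by
        by_cases h : (2:ℕ) ∣ x
        · refine Or.inl (hp2.pow_dvd_of_dvd_mul_right n ?_ hd2)
          intro hc
          have h' := Nat.dvd_sub h hc
          rw [Nat.sub_sub_self (by omega : 1 ≤ x)] at h'
          omega
        · exact Or.inr (hp2.pow_dvd_of_dvd_mul_left n h hd2)
      have c5 : 5 ^ n ∣ x ∨ 5 ^ n ∣ x - 1 := by
        by_cases h : (5:ℕ) ∣ x
        · refine Or.inl (hp5.pow_dvd_of_dvd_mul_right n ?_ hd5)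
          intro hc
          have h' := Nat.dvd_sub h hc
          rw [Nat.sub_sub_self (by omega : 1 ≤ x)] at h'
          omega
        · exact Or.inr (hp5.pow_dvd_of_dvd_mul_left n h hd5)
      have huniq : ∀ y, y < 10 ^ n → x ≡ y [MOD 10 ^ n] → x = y := by
        intro y hy h
        have h' : x % 10 ^ n = y % 10 ^ n := h
        rwa [Nat.mod_eq_of_lt hhi, Nat.mod_eq_of_lt hy] at h'
      rcases c2 with c2 | c2 <;> rcases c5 with c5 | c5
      · exfalso
        have h' : 10 ^ n ∣ x := by
          rw [hten]; exact (co25 n).mul_dvd_of_dvd_of_dvd c2 c5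
        have := Nat.le_of_dvd (by omega) h'
        omega
      · have hxa : x ≡ a [MOD 10 ^ n] := by
          rw [hten]
          exact Nat.chineseRemainder_modEq_unique (co25 n)
            ((Nat.modEq_zero_iff_dvd).2 c2)
            (((Nat.modEq_iff_dvd' (by omega)).2 c5).symm)
        simp [huniq a halt hxa]
      · have hxb : x ≡ b [MOD 10 ^ n] := by
          rw [hten]
          exact Nat.chineseRemainder_modEq_unique (co25 n)
            (((Nat.modEq_iff_dvd' (by omega)).2 c2).symm)
            ((Nat.modEq_zero_iff_dvd).2 c5)
        simp [huniq b hblt hxb]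
      · exfalso
        have h' : 10 ^ n ∣ x - 1 := by
          rw [hten]; exact (co25 n).mul_dvd_of_dvd_of_dvd c2 c5
        have := Nat.le_of_dvd (by omega) h'
        omega
    calc _ ≤ ({a, b} : Finset ℕ).card := Finset.card_le_card hsubs
    _ ≤ 2 := (Finset.card_insert_le _ _).trans (by simp)
end

section
/- Let B ≥ 2 be an integer with exactly m distinct prime factors, and let n ≥ 2 be an integer. Then the number of natural numbers x with B^(n-1) ≤ x < B^n satisfying x^2 ≡ x (mod B^n) is at most 2^m - 2. -/
lemma key_idem (p k x : ℕ) (hp : p.Prime) (h : x ^ 2 ≡ x [MOD p ^ k]) :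
    p ^ k ∣ x ∨ x ≡ 1 [MOD p ^ k] := by
  rcases Nat.eq_zero_or_pos k with rfl | hk
  · left; simpa using Nat.one_dvd x
  rcases Nat.eq_zero_or_pos x with rfl | hx
  · left; exact dvd_zero _
  have hdvd : p ^ k ∣ x * (x - 1) := by
    have h1 : x ≤ x ^ 2 := Nat.le_self_pow two_ne_zero x
    have h2 := (Nat.modEq_iff_dvd' h1).mp h.symm
    have h3 : x * (x - 1) = x ^ 2 - x := by rw [sq, Nat.mul_sub, mul_one]
    rwa [h3]
  have hcop : Nat.Coprime x (x - 1) := by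
    have hxe : x - 1 + 1 = x := Nat.succ_pred_eq_of_pos hx
    rw [← hxe]
    simp
  have hpd : p ∣ x * (x - 1) := (dvd_pow_self p hk.ne').trans hdvd
  rcases hp.dvd_mul.mp hpd with h1 | h2
  · left
    have hnd : ¬ p ∣ x - 1 := by
      intro hc
      have := Nat.dvd_gcd h1 hc
      rw [Nat.Coprime.gcd_eq_one hcop] at this
      exact hp.one_lt.ne' (Nat.dvd_one.mp this)
    have hc2 : Nat.Coprime (p ^ k) (x - 1) :=
      Nat.Coprime.pow_left _ ((hp.coprime_iff_not_dvd).mpr hnd)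
    exact hc2.dvd_of_dvd_mul_right hdvd
  · right
    have hnd : ¬ p ∣ x := by
      intro hc
      have := Nat.dvd_gcd hc h2
      rw [Nat.Coprime.gcd_eq_one hcop] at this
      exact hp.one_lt.ne' (Nat.dvd_one.mp this)
    have hc2 : Nat.Coprime (p ^ k) x :=
      Nat.Coprime.pow_left _ ((hp.coprime_iff_not_dvd).mpr hnd)
    have : p ^ k ∣ x - 1 := hc2.dvd_of_dvd_mul_left hdvd
    exact ((Nat.modEq_iff_dvd' hx).mpr this).symm

lemma card_idem_le (B n : ℕ) (hB : 2 ≤ B) (hn : 1 ≤ n) :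
    ((Finset.range (B ^ n)).filter (fun x => x ^ 2 ≡ x [MOD B ^ n])).card
      ≤ 2 ^ B.primeFactors.card := by
  classical
  set P := B.primeFactors with hP
  have hB0 : B ≠ 0 := by omega
  have hfact : ∏ p ∈ P, p ^ (n * B.factorization p) = B ^ n := by
    have h1 : ∏ p ∈ P, p ^ B.factorization p = B := by
      simpa [Finsupp.prod, Nat.support_factorization] using
        Nat.factorization_prod_pow_eq_self hB0
    calc ∏ p ∈ P, p ^ (n * B.factorization p)
        = ∏ p ∈ P, (p ^ B.factorization p) ^ n :=
          Finset.prod_congr rfl fun p _ => by rw [← pow_mul, mul_comm]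
      _ = (∏ p ∈ P, p ^ B.factorization p) ^ n := by rw [Finset.prod_pow]
      _ = B ^ n := by rw [h1]
  have hinj : ∀ x ∈ (Finset.range (B ^ n)).filter (fun x => x ^ 2 ≡ x [MOD B ^ n]),
      ∀ y ∈ (Finset.range (B ^ n)).filter (fun x => x ^ 2 ≡ x [MOD B ^ n]),
      (fun p : ↥P => decide ((p : ℕ) ^ (n * B.factorization (p : ℕ)) ∣ x)) =
      (fun p : ↥P => decide ((p : ℕ) ^ (n * B.factorization (p : ℕ)) ∣ y)) → x = y := by
    intro x hx y hy hxy
    simp only [Finset.mem_filter, Finset.mem_range] at hx hy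
    have hmod : ∀ p ∈ P, ((p : ℤ)) ^ (n * B.factorization p) ∣ (x : ℤ) - y := by
      intro p hp
      have hpp : p.Prime := Nat.prime_of_mem_primeFactors hp
      set q := p ^ (n * B.factorization p) with hq
      have hqdvd : q ∣ B ^ n := hfact ▸ Finset.dvd_prod_of_mem _ hp
      have hxq : x ^ 2 ≡ x [MOD q] := Nat.ModEq.of_dvd hqdvd hx.2
      have hyq : y ^ 2 ≡ y [MOD q] := Nat.ModEq.of_dvd hqdvd hy.2
      have hb : (q ∣ x) ↔ (q ∣ y) := by
        have := congrFun hxy ⟨p, hp⟩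
        simpa using this
      have hcast : ((p : ℤ)) ^ (n * B.factorization p) = (q : ℤ) := by
        rw [hq]; push_cast; ring
      rw [hcast]
      by_cases hdx : q ∣ x
      · have hdy : q ∣ y := hb.mp hdx
        exact dvd_sub (Int.natCast_dvd_natCast.mpr hdx) (Int.natCast_dvd_natCast.mpr hdy)
      · have hdy : ¬ q ∣ y := fun hc => hdx (hb.mpr hc)
        have hx1 : x ≡ 1 [MOD q] := (key_idem p _ x hpp hxq).resolve_left hdx
        have hy1 : y ≡ 1 [MOD q] := (key_idem p _ y hpp hyq).resolve_left hdy
        exact (hy1.trans hx1.symm).dvd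
    have hpair : (↑P : Set ℕ).Pairwise
        (Function.onFun IsCoprime fun p : ℕ => ((p : ℤ)) ^ (n * B.factorization p)) := by
      intro p hp r hr hne
      have hpp : p.Prime := Nat.prime_of_mem_primeFactors hp
      have hrp : r.Prime := Nat.prime_of_mem_primeFactors hr
      exact IsCoprime.pow (((Nat.coprime_primes hpp hrp).mpr hne).isCoprime)
    have hprod : ((B : ℤ)) ^ n ∣ (x : ℤ) - y := by
      have h := Finset.prod_dvd_of_coprime hpair hmod
      have heq : (∏ p ∈ P, ((p : ℤ)) ^ (n * B.factorization p)) = ((B : ℤ)) ^ n := by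
        rw [← Nat.cast_pow, ← hfact]; push_cast; ring
      rwa [heq] at h
    have hxy2 : x ≡ y [MOD B ^ n] := by
      have : ((B ^ n : ℕ) : ℤ) ∣ (y : ℤ) - x := by
        have h2 := dvd_neg.mpr hprod
        rw [neg_sub] at h2
        push_cast
        exact h2
      exact (Nat.modEq_iff_dvd).mpr this
    have := hxy2
    rw [Nat.ModEq, Nat.mod_eq_of_lt hx.1, Nat.mod_eq_of_lt hy.1] at this
    exact this
  have hcard := Finset.card_le_card_of_injOn
    (fun x => (fun p : ↥P => decide ((p : ℕ) ^ (n * B.factorization (p : ℕ)) ∣ x)))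
    (fun x _ => Finset.mem_univ _) hinj
  calc ((Finset.range (B ^ n)).filter (fun x => x ^ 2 ≡ x [MOD B ^ n])).card
      ≤ (Finset.univ : Finset (↥P → Bool)).card := hcard
    _ = 2 ^ P.card := by
        rw [Finset.card_univ, Fintype.card_fun, Fintype.card_bool, Fintype.card_coe]

theorem count_n_digit_upper (B n m : ℕ) (hB : 2 ≤ B) (hn : 2 ≤ n)
    (hm : m = B.primeFactors.card) :
    ((Finset.Ico (B ^ (n - 1)) (B ^ n)).filter
      (fun x => x ^ 2 ≡ x [MOD B ^ n])).card ≤ 2 ^ m - 2 := by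
  classical
  set T := (Finset.range (B ^ n)).filter (fun x => x ^ 2 ≡ x [MOD B ^ n]) with hT
  have hB1 : 2 ≤ B ^ (n - 1) := le_trans hB (Nat.le_self_pow (by omega) B)
  have hBn : B ^ (n - 1) < B ^ n := Nat.pow_lt_pow_right (by omega) (by omega)
  have hsub : ((Finset.Ico (B ^ (n - 1)) (B ^ n)).filter
      (fun x => x ^ 2 ≡ x [MOD B ^ n])) ⊆ T \ {0, 1} := by
    intro x hx
    simp only [Finset.mem_filter, Finset.mem_Ico] at hx
    simp only [hT, Finset.mem_sdiff, Finset.mem_filter, Finset.mem_range,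
      Finset.mem_insert, Finset.mem_singleton]
    exact ⟨⟨hx.1.2, hx.2⟩, by omega⟩
  have h01 : ({0, 1} : Finset ℕ) ⊆ T := by
    intro x hx
    simp only [Finset.mem_insert, Finset.mem_singleton] at hx
    simp only [hT, Finset.mem_filter, Finset.mem_range]
    rcases hx with rfl | rfl
    · exact ⟨by positivity, by simp [Nat.ModEq]⟩
    · exact ⟨by omega, by simp [Nat.ModEq]⟩
  have hcard01 : ({0, 1} : Finset ℕ).card = 2 := by decide
  have hTcard : T.card ≤ 2 ^ m := by
    rw [hm]; exact card_idem_le B n hB (by omega)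
  calc ((Finset.Ico (B ^ (n - 1)) (B ^ n)).filter
      (fun x => x ^ 2 ≡ x [MOD B ^ n])).card
      ≤ (T \ {0, 1}).card := Finset.card_le_card hsub
    _ = T.card - 2 := by rw [Finset.card_sdiff_of_subset h01, hcard01]
    _ ≤ 2 ^ m - 2 := Nat.sub_le_sub_right hTcard 2
end

section
/- Let B ≥ 2 be an integer with exactly m distinct prime factors, and let n ≥ 2 be an integer. Then the number of natural numbers x with B^(n-1) ≤ x < B^n satisfying x^2 ≡ x (mod B^n) is at least 2^(m-1) - 1. -/
/-- Key construction: for any nonempty proper subset `S` of the prime factors of `B`,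
there is an idempotent residue `e` mod `B^n` with `B^(n-1) ≤ e < B^n`, such that the set
of primes `p ∈ B.primeFactors` with `e ≡ 1 [MOD p]` is either `S` or its complement. -/
lemma key_idem_s16 (B n : ℕ) (hB : 2 ≤ B) (hn : 1 ≤ n) (S : Finset ℕ)
    (hSP : S ⊆ B.primeFactors) (hS : S.Nonempty) (hS' : (B.primeFactors \ S).Nonempty) :
    ∃ e, B ^ (n - 1) ≤ e ∧ e < B ^ n ∧ e ^ 2 ≡ e [MOD B ^ n] ∧
      (B.primeFactors.filter (fun p => e % p = 1) = S ∨
       B.primeFactors.filter (fun p => e % p = 1) = B.primeFactors \ S) := by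
  have hB0 : B ≠ 0 := by omega
  set P := B.primeFactors with hPdef
  set a := ∏ p ∈ S, p ^ (n * B.factorization p) with ha
  set b := ∏ p ∈ P \ S, p ^ (n * B.factorization p) with hb
  -- a * b = B ^ n
  have hab : a * b = B ^ n := by
    rw [ha, hb, mul_comm, Finset.prod_sdiff hSP]
    have : ∀ p ∈ P, p ^ (n * B.factorization p) = (p ^ B.factorization p) ^ n := by
      intro p _; rw [← pow_mul, mul_comm]
    rw [Finset.prod_congr rfl this, Finset.prod_pow]
    congr 1
    rw [← Nat.prod_factorization_eq_prod_primeFactors (fun p k => p ^ k)]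
    exact Nat.factorization_prod_pow_eq_self hB0
  -- coprimality
  have hprime : ∀ p ∈ P, p.Prime := fun p hp => Nat.prime_of_mem_primeFactors hp
  have hcop : Nat.Coprime a b := by
    apply Nat.Coprime.prod_left
    intro p hp
    apply Nat.Coprime.prod_right
    intro q hq
    have hpq : p ≠ q := by
      rintro rfl
      exact (Finset.mem_sdiff.mp hq).2 hp
    exact Nat.Coprime.pow _ _
      ((Nat.coprime_primes (hprime p (hSP hp)) (hprime q (Finset.mem_sdiff.mp hq).1)).mpr hpq)
  -- basic size facts
  have hdvd_a : ∀ p ∈ S, p ∣ a := by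
    intro p hp
    have hvp : 0 < B.factorization p :=
      Nat.Prime.factorization_pos_of_dvd (hprime p (hSP hp)) hB0
        (Nat.dvd_of_mem_primeFactors (hSP hp))
    exact dvd_trans (dvd_pow_self p (by positivity)) (Finset.dvd_prod_of_mem _ hp)
  have hdvd_b : ∀ p ∈ P \ S, p ∣ b := by
    intro p hp
    have hvp : 0 < B.factorization p :=
      Nat.Prime.factorization_pos_of_dvd (hprime p (Finset.mem_sdiff.mp hp).1) hB0
        (Nat.dvd_of_mem_primeFactors (Finset.mem_sdiff.mp hp).1)
    exact dvd_trans (dvd_pow_self p (by positivity)) (Finset.dvd_prod_of_mem _ hp)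
  have hprime2 : ∀ p ∈ P, 2 ≤ p := fun p hp => (hprime p hp).two_le
  have hapos : 0 < a := Finset.prod_pos fun q hq =>
    pow_pos (by have := hprime2 q (hSP hq); omega) _
  have hbpos : 0 < b := Finset.prod_pos fun q hq =>
    pow_pos (by have := hprime2 q (Finset.mem_sdiff.mp hq).1; omega) _
  have ha2 : 2 ≤ a := by
    obtain ⟨p, hp⟩ := hS
    exact le_trans (hprime2 p (hSP hp)) (Nat.le_of_dvd hapos (hdvd_a p hp))
  have hb2 : 2 ≤ b := by
    obtain ⟨p, hp⟩ := hS'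
    exact le_trans (hprime2 p (Finset.mem_sdiff.mp hp).1)
      (Nat.le_of_dvd hbpos (hdvd_b p hp))
  have hBn2 : 2 ≤ B ^ n := le_trans hB (Nat.le_self_pow (by omega) B)
  have hadvdBn : a ∣ B ^ n := ⟨b, hab.symm⟩
  have hbdvdBn : b ∣ B ^ n := ⟨a, by rw [mul_comm]; exact hab.symm⟩
  -- CRT residues
  obtain ⟨k1, hk1a, hk1b⟩ := Nat.chineseRemainder hcop 1 0
  obtain ⟨k2, hk2a, hk2b⟩ := Nat.chineseRemainder hcop 0 1
  set e1 := k1 % B ^ n with he1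
  set e2 := k2 % B ^ n with he2
  have he1m : e1 ≡ k1 [MOD B ^ n] := Nat.mod_modEq _ _
  have he2m : e2 ≡ k2 [MOD B ^ n] := Nat.mod_modEq _ _
  have he1a : e1 ≡ 1 [MOD a] := (he1m.of_dvd hadvdBn).trans hk1a
  have he1b : e1 ≡ 0 [MOD b] := (he1m.of_dvd hbdvdBn).trans hk1b
  have he2a : e2 ≡ 0 [MOD a] := (he2m.of_dvd hadvdBn).trans hk2a
  have he2b : e2 ≡ 1 [MOD b] := (he2m.of_dvd hbdvdBn).trans hk2b
  have he1lt : e1 < B ^ n := Nat.mod_lt _ (by omega)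
  have he2lt : e2 < B ^ n := Nat.mod_lt _ (by omega)
  have he1pos : 1 ≤ e1 := by
    rcases Nat.eq_zero_or_pos e1 with h | h
    · exfalso
      have : (0 : ℕ) ≡ 1 [MOD a] := h ▸ he1a
      unfold Nat.ModEq at this
      rw [Nat.zero_mod, Nat.mod_eq_of_lt (by omega)] at this
      omega
    · exact h
  have he2pos : 1 ≤ e2 := by
    rcases Nat.eq_zero_or_pos e2 with h | h
    · exfalso
      have : (0 : ℕ) ≡ 1 [MOD b] := h ▸ he2b
      unfold Nat.ModEq at this
      rw [Nat.zero_mod, Nat.mod_eq_of_lt (by omega)] at this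
      omega
    · exact h
  -- sum is B^n + 1
  have hsum1 : e1 + e2 ≡ 1 [MOD B ^ n] := by
    rw [← hab]
    exact (Nat.modEq_and_modEq_iff_modEq_mul hcop).mp
      ⟨by simpa using he1a.add he2a, by simpa using he1b.add he2b⟩
  have hsum : e1 + e2 = B ^ n + 1 := by
    have h1 : (1 : ℕ) ≤ e1 + e2 := by omega
    have hdvd : B ^ n ∣ e1 + e2 - 1 := (Nat.modEq_iff_dvd' h1).mp hsum1.symm
    obtain ⟨c, hc⟩ := hdvd
    have hc2 : c < 2 := by
      by_contra hcon
      push_neg at hcon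
      have : 2 * B ^ n ≤ B ^ n * c := by
        calc 2 * B ^ n = B ^ n * 2 := by ring
        _ ≤ B ^ n * c := Nat.mul_le_mul_left _ hcon
      omega
    interval_cases c
    · omega
    · omega
  -- idempotency
  have hidem1 : e1 ^ 2 ≡ e1 [MOD B ^ n] := by
    rw [← hab]
    refine (Nat.modEq_and_modEq_iff_modEq_mul hcop).mp ⟨?_, ?_⟩
    · calc e1 ^ 2 ≡ 1 ^ 2 [MOD a] := he1a.pow 2
        _ = 1 := one_pow 2
        _ ≡ e1 [MOD a] := he1a.symm
    · calc e1 ^ 2 ≡ 0 ^ 2 [MOD b] := he1b.pow 2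
        _ = 0 := by ring
        _ ≡ e1 [MOD b] := he1b.symm
  have hidem2 : e2 ^ 2 ≡ e2 [MOD B ^ n] := by
    rw [← hab]
    refine (Nat.modEq_and_modEq_iff_modEq_mul hcop).mp ⟨?_, ?_⟩
    · calc e2 ^ 2 ≡ 0 ^ 2 [MOD a] := he2a.pow 2
        _ = 0 := by ring
        _ ≡ e2 [MOD a] := he2a.symm
    · calc e2 ^ 2 ≡ 1 ^ 2 [MOD b] := he2b.pow 2
        _ = 1 := one_pow 2
        _ ≡ e2 [MOD b] := he2b.symm
  -- recovering the subsets
  have hmod1 : ∀ p ∈ P, (p ∈ S → e1 % p = 1) ∧ (p ∈ P \ S → e1 % p = 0) := by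
    intro p hp
    constructor
    · intro hpS
      have : e1 ≡ 1 [MOD p] := he1a.of_dvd (hdvd_a p hpS)
      unfold Nat.ModEq at this
      rwa [Nat.one_mod_eq_one.mpr (by have := hprime2 p hp; omega)] at this
    · intro hpS
      have : e1 ≡ 0 [MOD p] := he1b.of_dvd (hdvd_b p hpS)
      unfold Nat.ModEq at this
      rwa [Nat.zero_mod] at this
  have hmod2 : ∀ p ∈ P, (p ∈ S → e2 % p = 0) ∧ (p ∈ P \ S → e2 % p = 1) := by
    intro p hp
    constructor
    · intro hpS
      have : e2 ≡ 0 [MOD p] := he2a.of_dvd (hdvd_a p hpS)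
      unfold Nat.ModEq at this
      rwa [Nat.zero_mod] at this
    · intro hpS
      have : e2 ≡ 1 [MOD p] := he2b.of_dvd (hdvd_b p hpS)
      unfold Nat.ModEq at this
      rwa [Nat.one_mod_eq_one.mpr (by have := hprime2 p hp; omega)] at this
  have hBsplit : 2 * B ^ (n - 1) ≤ B ^ n := by
    calc 2 * B ^ (n - 1) ≤ B * B ^ (n - 1) := Nat.mul_le_mul_right _ hB
      _ = B ^ n := by rw [← pow_succ']; congr 1; omega
  rcases le_total e1 e2 with hle | hle
  · refine ⟨e2, by omega, he2lt, hidem2, Or.inr ?_⟩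
    ext p
    simp only [Finset.mem_filter, Finset.mem_sdiff]
    constructor
    · rintro ⟨hp, hmod⟩
      refine ⟨hp, fun hpS => ?_⟩
      have := (hmod2 p hp).1 hpS
      omega
    · intro hp
      exact ⟨hp.1, (hmod2 p hp.1).2 (Finset.mem_sdiff.mpr hp)⟩
  · refine ⟨e1, by omega, he1lt, hidem1, Or.inl ?_⟩
    ext p
    simp only [Finset.mem_filter]
    constructor
    · rintro ⟨hp, hmod⟩
      by_contra hpS
      have := (hmod1 p hp).2 (Finset.mem_sdiff.mpr ⟨hp, hpS⟩)
      omega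
    · intro hp
      exact ⟨hSP hp, (hmod1 p (hSP hp)).1 hp⟩

theorem count_n_digit_lower (B n m : ℕ) (hB : 2 ≤ B) (hn : 2 ≤ n)
    (hm : m = B.primeFactors.card) :
    2 ^ (m - 1) - 1 ≤ ((Finset.Ico (B ^ (n - 1)) (B ^ n)).filter
      (fun x => x ^ 2 ≡ x [MOD B ^ n])).card := by
  have hB0 : B ≠ 0 := by omega
  set P := B.primeFactors with hP
  have hPne : P.Nonempty := Nat.nonempty_primeFactors.mpr hB
  set p0 := P.min' hPne with hp0
  have hp0P : p0 ∈ P := P.min'_mem hPne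
  set Q := P.erase p0 with hQ
  have hp0Q : p0 ∉ Q := Finset.notMem_erase _ _
  set D := Q.powerset.erase Q with hD
  have hQcard : Q.card = m - 1 := by rw [hQ, Finset.card_erase_of_mem hp0P, hm]
  have hcard : D.card = 2 ^ (m - 1) - 1 := by
    rw [hD, Finset.card_erase_of_mem (Finset.mem_powerset_self Q), Finset.card_powerset, hQcard]
  have key : ∀ T : Finset ℕ, ∃ e, T ∈ D →
      (e ∈ (Finset.Ico (B ^ (n - 1)) (B ^ n)).filter (fun x => x ^ 2 ≡ x [MOD B ^ n]) ∧
       (P.filter (fun p => e % p = 1) = insert p0 T ∨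
        P.filter (fun p => e % p = 1) = P \ insert p0 T)) := by
    intro T
    by_cases hT : T ∈ D
    · have hTQ : T ⊆ Q := Finset.mem_powerset.mp (Finset.mem_of_mem_erase hT)
      have hTne : T ≠ Q := Finset.ne_of_mem_erase hT
      have hSub : insert p0 T ⊆ P :=
        Finset.insert_subset hp0P (hTQ.trans (Finset.erase_subset _ _))
      have hSne : (insert p0 T).Nonempty := ⟨p0, Finset.mem_insert_self _ _⟩
      have hSc : (P \ insert p0 T).Nonempty := by
        rw [Finset.sdiff_nonempty]
        intro hPS
        apply hTne
        apply Finset.Subset.antisymm hTQ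
        intro q hq
        have hq' : q ∈ insert p0 T := hPS (Finset.mem_of_mem_erase hq)
        rcases Finset.mem_insert.mp hq' with h | h
        · exact absurd (h ▸ hq) hp0Q
        · exact h
      obtain ⟨e, h1, h2, h3, h4⟩ := key_idem_s16 B n hB (by omega) _ hSub hSne hSc
      exact ⟨e, fun _ => ⟨Finset.mem_filter.mpr ⟨Finset.mem_Ico.mpr ⟨h1, h2⟩, h3⟩, h4⟩⟩
    · exact ⟨0, fun h => absurd h hT⟩
  choose f hf using key
  rw [← hcard]
  apply Finset.card_le_card_of_injOn f (fun T hT => (hf T hT).1)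
  intro T1 hT1' T2 hT2' heq
  have hT1 : T1 ∈ D := hT1'
  have hT2 : T2 ∈ D := hT2'
  have hnotmem : ∀ T : Finset ℕ, T ∈ D → p0 ∉ T := by
    intro T hT hmem
    exact hp0Q (Finset.mem_powerset.mp (Finset.mem_of_mem_erase hT) hmem)
  have hSub : ∀ T : Finset ℕ, T ∈ D → insert p0 T ⊆ P := by
    intro T hT
    exact Finset.insert_subset hp0P
      ((Finset.mem_powerset.mp (Finset.mem_of_mem_erase hT)).trans (Finset.erase_subset _ _))
  have h41 := (hf T1 hT1).2
  have h42 := (hf T2 hT2).2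
  rw [heq] at h41
  have hins : insert p0 T1 = insert p0 T2 := by
    rcases h41 with h1 | h1 <;> rcases h42 with h2 | h2
    · exact h1 ▸ h2 ▸ rfl
    · exfalso
      have : p0 ∈ P \ insert p0 T2 := by rw [← h2, h1]; exact Finset.mem_insert_self _ _
      exact (Finset.mem_sdiff.mp this).2 (Finset.mem_insert_self _ _)
    · exfalso
      have : p0 ∈ P \ insert p0 T1 := by rw [← h1, h2]; exact Finset.mem_insert_self _ _
      exact (Finset.mem_sdiff.mp this).2 (Finset.mem_insert_self _ _)
    · have hPP : P \ insert p0 T1 = P \ insert p0 T2 := by rw [← h1, ← h2]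
      calc insert p0 T1 = P \ (P \ insert p0 T1) :=
            (Finset.sdiff_sdiff_eq_self (hSub T1 hT1)).symm
        _ = P \ (P \ insert p0 T2) := by rw [hPP]
        _ = insert p0 T2 := Finset.sdiff_sdiff_eq_self (hSub T2 hT2)
  calc T1 = (insert p0 T1).erase p0 := (Finset.erase_insert (hnotmem T1 hT1)).symm
    _ = (insert p0 T2).erase p0 := by rw [hins]
    _ = T2 := Finset.erase_insert (hnotmem T2 hT2)
end
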